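/- Let X and Y be independent exponential random variables with means λ_sr > 0 and λ_rd > 0 respectively, and let P_Sm, P_Rm, θ, ζ, N_0 > 0 satisfy P_Rm/(θ·P_Sm) ≥ N_0·ζ/P_Sm. Then P( P_Sm·X/N_0 ≥ ζ and min(θ·P_Sm·X, P_Rm)·Y/N_0 ≥ ζ ) = (1/λ_sr) · ∫_{N_0·ζ/P_Sm}^{P_Rm/(θ·P_Sm)} exp( −x/λ_sr − N_0·ζ/(θ·P_Sm·λ_rd·x) ) dx + exp( −P_Rm/(θ·P_Sm·λ_sr) − N_0·ζ/(P_Rm·λ_rd) ). -/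

import Mathlib

/-!
Conditioning on `X`, the event is `{X ≥ a, Y ≥ g X}` with `a = N₀ζ/P_Sm` and
`g x = N₀ζ / min(θ P_Sm x, P_Rm)`, so by independence its probability is
`∫_{x ≥ a} exp(-g x / λ_rd) d(law X)`. Below `b = P_Rm/(θ P_Sm)` the minimum is `θ P_Sm x` and
the integrand against the exponential density gives the integral term; above `b` it is the
constant `exp(-N₀ζ/(P_Rm λ_rd))`, multiplied by the tail `P(X ≥ b) = exp(-b/λ_sr)`.
-/

open MeasureTheory ProbabilityTheory
open Real Set

namespace ProbabilityTheory

variable {r : ℝ}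

lemma expMeasure_singleton (r c : ℝ) : expMeasure r {c} = 0 :=
  withDensity_absolutelyContinuous _ _ (Real.volume_singleton)

lemma expMeasure_Ici (hr : 0 < r) {c : ℝ} (hc : 0 ≤ c) :
    expMeasure r (Ici c) = ENNReal.ofReal (exp (-(r * c))) := by
  have := isProbabilityMeasure_expMeasure hr
  have hcdf : 0 ≤ 1 - exp (-(r * c)) :=
    sub_nonneg.2 (exp_le_one_iff.2 (neg_nonpos.2 (mul_nonneg hr.le hc)))
  rw [← measure_congr (Ioi_ae_eq_Ici' (expMeasure_singleton r c)), ← compl_Iic,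
    prob_compl_eq_one_sub measurableSet_Iic, ← ofReal_cdf, cdf_expMeasure_eq hr, if_pos hc,
    ← ENNReal.ofReal_one, ← ENNReal.ofReal_sub _ hcdf, sub_sub_cancel]

lemma setLIntegral_expMeasure {s : Set ℝ} (hs : MeasurableSet s) (hs0 : s ⊆ Ici 0)
    (f : ℝ → ENNReal) :
    ∫⁻ x in s, f x ∂expMeasure r = ∫⁻ x in s, ENNReal.ofReal (r * exp (-(r * x))) * f x := by
  rw [expMeasure, gammaMeasure, setLIntegral_withDensity_eq_setLIntegral_mul_non_measurable _
    (f := gammaPDF 1 r) (measurable_gammaPDFReal 1 r).ennreal_ofReal f hs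
    (ae_of_all _ fun _ ↦ ENNReal.ofReal_lt_top)]
  refine setLIntegral_congr_fun hs fun x hx ↦ ?_
  rw [Pi.mul_apply, ← exponentialPDF_of_nonneg (hs0 hx)]
  rfl

lemma measure_mem_and_le_of_indepFun_expMeasure {Ω α : Type*} [MeasurableSpace Ω]
    [MeasurableSpace α] {μ : Measure Ω} [IsFiniteMeasure μ] {X : Ω → α} {Y : Ω → ℝ}
    (hX : Measurable X) (hY : Measurable Y) (hXY : IndepFun X Y μ) (hr : 0 < r)
    (hYlaw : μ.map Y = expMeasure r) {A : Set α} (hA : MeasurableSet A) {g : α → ℝ}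
    (hg : Measurable g) (hg0 : ∀ x ∈ A, 0 ≤ g x) :
    μ {ω | X ω ∈ A ∧ g (X ω) ≤ Y ω} = ∫⁻ x in A, ENNReal.ofReal (exp (-(r * g x))) ∂μ.map X := by
  have := isProbabilityMeasure_expMeasure hr
  set T : Set (α × ℝ) := {p | p.1 ∈ A ∧ g p.1 ≤ p.2}
  have hT : MeasurableSet T :=
    (measurable_fst hA).inter (measurableSet_le (hg.comp measurable_fst) measurable_snd)
  have hslice : ∀ x,
      expMeasure r (Prod.mk x ⁻¹' T) = A.indicator (fun x ↦ expMeasure r (Ici (g x))) x := by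
    intro x
    by_cases hx : x ∈ A
    · simp [T, hx, Set.indicator_of_mem, Ici_def]
    · simp [T, hx]
  have hlaw : μ.map (fun ω ↦ (X ω, Y ω)) = (μ.map X).prod (expMeasure r) := by
    rw [← hYlaw]
    exact (indepFun_iff_map_prod_eq_prod_map_map hX.aemeasurable hY.aemeasurable).mp hXY
  calc μ {ω | X ω ∈ A ∧ g (X ω) ≤ Y ω} = μ.map (fun ω ↦ (X ω, Y ω)) T :=
        (Measure.map_apply (hX.prodMk hY) hT).symm
    _ = ∫⁻ x in A, expMeasure r (Ici (g x)) ∂μ.map X := by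
      rw [hlaw, Measure.prod_apply hT, lintegral_congr hslice, lintegral_indicator hA]
    _ = _ := setLIntegral_congr_fun hA fun x hx ↦ expMeasure_Ici hr (hg0 x hx)

lemma setLIntegral_Ici_exp_neg_div_min (hr : 0 < r) {k P : ℝ} (hk : 0 < k) (hP : 0 < P)
    (c s : ℝ) :
    ∫⁻ x in Ici (P / k), ENNReal.ofReal (exp (-(s * (c / min (k * x) P)))) ∂expMeasure r =
      ENNReal.ofReal (exp (-(r * (P / k)) - s * (c / P))) := by
  have hmin : ∀ x ∈ Ici (P / k), min (k * x) P = P :=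
    fun x hx ↦ min_eq_right ((div_le_iff₀' hk).1 hx)
  rw [setLIntegral_congr_fun measurableSet_Ici fun x hx ↦ by rw [hmin x hx], setLIntegral_const,
    expMeasure_Ici hr (by positivity), ← ENNReal.ofReal_mul (exp_nonneg _), ← exp_add]
  ring_nf

lemma setLIntegral_Ico_exp_neg_div_min (hr : 0 < r) {a k P : ℝ} (ha : 0 < a) (hk : 0 < k)
    (hab : a ≤ P / k) (c s : ℝ) :
    ∫⁻ x in Ico a (P / k), ENNReal.ofReal (exp (-(s * (c / min (k * x) P)))) ∂expMeasure r =
      ENNReal.ofReal (r * ∫ x in a..P / k, exp (-(r * x) - s * c / (k * x))) := by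
  set F := fun x ↦ exp (-(r * x) - s * c / (k * x))
  have hF : ContinuousOn F (Icc a (P / k)) := by
    fun_prop (disch := exact fun x hx ↦ (mul_pos hk (ha.trans_le hx.1)).ne')
  calc _ = ∫⁻ x in Ico a (P / k), ENNReal.ofReal (r * F x) := by
        rw [setLIntegral_expMeasure measurableSet_Ico fun x hx ↦ ha.le.trans hx.1]
        refine setLIntegral_congr_fun measurableSet_Ico fun x hx ↦ ?_
        have hmin : min (k * x) P = k * x := min_eq_left ((lt_div_iff₀' hk).1 hx.2).le
        rw [hmin, ← ENNReal.ofReal_mul (by positivity), mul_assoc, ← exp_add]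
        congr 3
        ring
    _ = ENNReal.ofReal (∫ x in Ico a (P / k), r * F x) :=
        (ofReal_integral_eq_lintegral_ofReal
          ((hF.const_smul r).integrableOn_Icc.mono_set Ico_subset_Icc_self)
          (ae_of_all _ fun _ ↦ mul_nonneg hr.le (exp_nonneg _))).symm
    _ = _ := by
      rw [integral_const_mul, intervalIntegral.integral_of_le hab,
        setIntegral_congr_set Ico_ae_eq_Ioc]

end ProbabilityTheory

lemma le_mul_div_iff_div_le {ζ m N y : ℝ} (hN : 0 < N) (hm : 0 < m) :
    ζ ≤ m * y / N ↔ N * ζ / m ≤ y := by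
  rw [le_div_iff₀ hN, div_le_iff₀ hm, mul_comm N, mul_comm y]

lemma snr_event_iff {PSm PRm θ ζ N0 : ℝ} (hPSm : 0 < PSm) (hPRm : 0 < PRm) (hθ : 0 < θ)
    (hζ : 0 < ζ) (hN0 : 0 < N0) (x y : ℝ) :
    (PSm * x / N0 ≥ ζ ∧ min (θ * PSm * x) PRm * y / N0 ≥ ζ) ↔
      (x ∈ Ici (N0 * ζ / PSm) ∧ N0 * ζ / min (θ * PSm * x) PRm ≤ y) := by
  rw [ge_iff_le, ge_iff_le, le_mul_div_iff_div_le hN0 hPSm, mem_Ici]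
  refine and_congr_right fun hx ↦ le_mul_div_iff_div_le hN0 (lt_min ?_ hPRm)
  have : 0 < x := (by positivity : 0 < N0 * ζ / PSm).trans_le hx
  positivity

theorem noise_dominant_case_I
    {Ω : Type*} [MeasureSpace Ω] [IsProbabilityMeasure (ℙ : Measure Ω)]
    (X Y : Ω → ℝ) (hXm : Measurable X) (hYm : Measurable Y)
    (lsr lrd : ℝ) (hlsr : 0 < lsr) (hlrd : 0 < lrd)
    (hX : Measure.map X ℙ = expMeasure lsr⁻¹)
    (hY : Measure.map Y ℙ = expMeasure lrd⁻¹)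
    (hind : IndepFun X Y ℙ)
    (PSm PRm θ ζ N0 : ℝ)
    (hPSm : 0 < PSm) (hPRm : 0 < PRm) (hθ : 0 < θ) (hζ : 0 < ζ) (hN0 : 0 < N0)
    (hcase : N0 * ζ / PSm ≤ PRm / (θ * PSm)) :
    (ℙ {ω | PSm * X ω / N0 ≥ ζ ∧ min (θ * PSm * X ω) PRm * Y ω / N0 ≥ ζ}).toReal =
      (1 / lsr) * (∫ x in (N0 * ζ / PSm)..(PRm / (θ * PSm)),
          Real.exp (-(x / lsr) - N0 * ζ / (θ * PSm * lrd * x))) +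
        Real.exp (-(PRm / (θ * PSm * lsr)) - N0 * ζ / (PRm * lrd)) := by
  have ha : 0 < N0 * ζ / PSm := by positivity
  have hk : 0 < θ * PSm := by positivity
  have hevent : {ω | PSm * X ω / N0 ≥ ζ ∧ min (θ * PSm * X ω) PRm * Y ω / N0 ≥ ζ} =
      {ω | X ω ∈ Ici (N0 * ζ / PSm) ∧ N0 * ζ / min (θ * PSm * X ω) PRm ≤ Y ω} :=
    Set.ext fun ω ↦ snr_event_iff hPSm hPRm hθ hζ hN0 (X ω) (Y ω)
  have hg0 : ∀ x ∈ Ici (N0 * ζ / PSm), 0 ≤ N0 * ζ / min (θ * PSm * x) PRm :=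
    fun x hx ↦ div_nonneg (by positivity) (le_min (mul_nonneg hk.le (ha.trans_le hx).le) hPRm.le)
  have hint : 0 ≤ lsr⁻¹ * ∫ x in (N0 * ζ / PSm)..(PRm / (θ * PSm)),
      exp (-(lsr⁻¹ * x) - lrd⁻¹ * (N0 * ζ) / (θ * PSm * x)) :=
    mul_nonneg (by positivity) (intervalIntegral.integral_nonneg hcase fun _ _ ↦ exp_nonneg _)
  rw [hevent, measure_mem_and_le_of_indepFun_expMeasure hXm hYm hind (inv_pos.2 hlrd) hY
      measurableSet_Ici (by fun_prop) hg0, hX, ← Ico_union_Ici_eq_Ici hcase,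
    lintegral_union measurableSet_Ici ((Iio_disjoint_Ici le_rfl).mono_left Ico_subset_Iio_self),
    setLIntegral_Ico_exp_neg_div_min (inv_pos.2 hlsr) ha hk hcase,
    setLIntegral_Ici_exp_neg_div_min (inv_pos.2 hlsr) hk hPRm,
    ← ENNReal.ofReal_add hint (exp_nonneg _),
    ENNReal.toReal_ofReal (add_nonneg hint (exp_nonneg _))]
  congr 1
  · rw [one_div]
    exact congrArg _ (intervalIntegral.integral_congr fun x _ ↦ by ring_nf)
  · ring_nf
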